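/- arXiv:2411.19606 — 7 statements merged into one kernel-verified Lean document; each statement's English description precedes it below -/
import Mathlib

section
/- For every finite coloring of the natural numbers (with at least 2 colors on ℕ≥2), there exist natural numbers x, y ≥ 2 with x ≠ y such that x, y, and x^y all receive the same color. -/
/-!
With `x = 2 ^ m` and `y = 2 ^ K` it suffices to find `K ≠ m` such that `K`, `m` and `m * 2 ^ K`
have one colour under `ψ n = c (2 ^ n)`. Iterating a finitary van der Waerden theorem, build
stages `v = 0, 1, …, n - 1`: stage `v` is a progression of exponents `b v + j * d v`, `j ≤ L v`,
along which the colour of `2 ^ e * d u` is constant for every earlier difference `d u`.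
As there are more stages than sets of colours, two of the sets
`S v = {ψ (2 ^ b v * d u) | u < v}` agree, say `S v = S w` with `v < w`. This gives `u < v` with
`ψ (2 ^ b w * d v) = ψ (2 ^ b v * d u)`, and `K = 2 ^ b w * d v`, `m = 2 ^ b v * d u` work because
`m * 2 ^ K` is the term `j = 2 ^ b w` of the progression of stage `v`. The lengths `L v` are fixed
in advance, larger than `2 ^ N` for the van der Waerden bound `N` of every later stage, so that
this term exists.
-/

open Finset

theorem exists_bounded_mono_arithProg (κ : Type*) [Finite κ] (l : ℕ) :
    ∃ N, ∀ C : ℕ → κ, ∃ b d, 0 < d ∧ b + l * d ≤ N ∧ ∀ j ≤ l, C (b + j * d) = C b := by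
  classical
  obtain ⟨ι, _, hι⟩ := Combinatorics.Line.exists_mono_in_high_dimension (Fin (l + 1)) κ
  refine ⟨Fintype.card ι * l, fun C => ?_⟩
  -- Along a combinatorial line the coordinate sum is an arithmetic progression.
  obtain ⟨line, c, hc⟩ := hι fun v => C (∑ i, (v i : ℕ))
  set d := #{i | line.idxFun i = none}
  have hsum (x : Fin (l + 1)) : ∑ i, (line x i : ℕ) = ∑ i, (line 0 i : ℕ) + x * d := by
    have (i : ι) : (line x i : ℕ) = line 0 i + if line.idxFun i = none then (x : ℕ) else 0 := by
      rcases h : line.idxFun i <;> simp [Combinatorics.Line.coe_apply, h]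
    simp only [this, sum_add_distrib, sum_ite, sum_const_zero, add_zero, sum_const, smul_eq_mul,
      mul_comm, d]
  refine ⟨∑ i, (line 0 i : ℕ), d,
    card_pos.2 ⟨_, mem_filter.2 ⟨mem_univ _, line.proper.choose_spec⟩⟩, ?_, fun j hj => ?_⟩
  · calc _ = ∑ i, (line (Fin.last l) i : ℕ) := by rw [hsum (Fin.last l), Fin.val_last]
      _ ≤ ∑ _ : ι, l := sum_le_sum fun i _ => Fin.is_le _
      _ = _ := by simp
  · rw [← hsum ⟨j, by omega⟩]
    exact (hc _).trans (hc 0).symm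

theorem exists_seq_dominating (f : ℕ → ℕ) (n : ℕ) :
    ∃ L : ℕ → ℕ, ∀ v w, v < w → w < n → f (L w) ≤ L v := by
  induction n with
  | zero => exact ⟨0, by omega⟩
  | succ n ih =>
    obtain ⟨L, hL⟩ := ih
    refine ⟨fun | 0 => ∑ w ∈ range n, f (L w) | s + 1 => L s, ?_⟩
    rintro (_ | v) (_ | w) hvw hw
    · omega
    · exact single_le_sum (f := fun w => f (L w)) (fun _ _ => Nat.zero_le _)
        (mem_range.2 (by omega))
    · omega
    · exact hL v w (by omega) (by omega)

theorem exists_iterated_mono_progs {κ : Type*} (ψ : ℕ → κ) (q n : ℕ) (L W : ℕ → ℕ)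
    (hW : ∀ l (C : ℕ → Fin n → κ), ∃ b d, 0 < d ∧ b + l * d ≤ W l ∧
      ∀ j ≤ l, C (b + j * d) = C b) (s : ℕ) (hs : s ≤ n) :
    ∃ b d : ℕ → ℕ, ∀ i < s, 0 < d i ∧ b i ≤ W (L i) ∧
      ∀ p < i, ∀ j ≤ L i, ψ (q ^ (b i + j * d i) * d p) = ψ (q ^ b i * d p) := by
  induction s with
  | zero => exact ⟨0, 0, by simp⟩
  | succ s ih =>
    obtain ⟨b, d, hbd⟩ := ih (by omega)
    obtain ⟨b₀, d₀, hd₀, hb₀, hmono⟩ := hW (L s) fun j p => ψ (q ^ j * d p)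
    refine ⟨fun i => if i < s then b i else b₀, fun i => if i < s then d i else d₀,
      fun i hi => ?_⟩
    rcases Nat.lt_succ_iff_lt_or_eq.1 hi with hi | rfl
    · obtain ⟨h₁, h₂, h₃⟩ := hbd i hi
      refine ⟨by simpa [hi] using h₁, by simpa [hi] using h₂, fun p hp j hj => ?_⟩
      simpa [hi, hp.trans hi] using h₃ p hp j hj
    · refine ⟨by simpa using hd₀, by simpa using (Nat.le_add_right _ _).trans hb₀,
        fun p hp j hj => ?_⟩
      simpa [hp] using congrFun (hmono j hj) ⟨p, by omega⟩

theorem exists_mono_mul_pow_of_mono_prog {κ : Type*} (ψ : ℕ → κ) {q b d t l j : ℕ} (hq : 2 ≤ q)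
    (hd : 0 < d) (ht : 0 < t) (hj : 0 < j) (hjl : j < l)
    (hmono : ∀ i ≤ l, ψ (q ^ (b + i * d) * t) = ψ (q ^ b * t)) (hcol : ψ (j * d) = ψ (q ^ b * t)) :
    ∃ K m, 0 < K ∧ 0 < m ∧ K ≠ m ∧ ψ K = ψ m ∧ ψ m = ψ (m * q ^ K) := by
  obtain ⟨i, hi, hne⟩ : ∃ i ≤ 1, j * d ≠ q ^ (b + i * d) * t := by
    by_cases h : j * d = q ^ b * t
    · refine ⟨1, le_rfl, h ▸ (Nat.mul_lt_mul_of_lt_of_le ?_ le_rfl ht).ne⟩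
      exact pow_lt_pow_right₀ (by omega) (by omega)
    · exact ⟨0, zero_le_one, by simpa using h⟩
  refine ⟨j * d, q ^ (b + i * d) * t, Nat.mul_pos hj hd, by positivity, hne, ?_, ?_⟩
  · rw [hcol, hmono i (by omega)]
  · have : q ^ (b + i * d) * t * q ^ (j * d) = q ^ (b + (i + j) * d) * t := by ring
    rw [this, hmono (i + j) (by omega), hmono i (by omega)]

theorem exists_mono_mul_pow {κ : Type*} [Finite κ] (ψ : ℕ → κ) {q : ℕ} (hq : 2 ≤ q) :
    ∃ K m, 0 < K ∧ 0 < m ∧ K ≠ m ∧ ψ K = ψ m ∧ ψ m = ψ (m * q ^ K) := by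
  classical
  cases nonempty_fintype κ
  set n := Fintype.card (Set κ) + 1
  choose W hW using exists_bounded_mono_arithProg (Fin n → κ)
  obtain ⟨L, hL⟩ := exists_seq_dominating (fun l => q ^ W l + 1) n
  obtain ⟨b, d, hstage⟩ := exists_iterated_mono_progs ψ q n L W hW n le_rfl
  obtain ⟨v, w, hne, hS⟩ := Fintype.exists_ne_map_eq_of_card_lt
    (fun v : Fin n => (fun u => ψ (q ^ b v * d u)) '' Set.Iio (v : ℕ)) (by simp [n])
  wlog hvw : v < w generalizing v w
  · exact this w v hne.symm hS.symm (hne.lt_or_gt.resolve_left hvw)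
  obtain ⟨u, hu, hcol⟩ : ∃ u < (v : ℕ), ψ (q ^ b v * d u) = ψ (q ^ b w * d v) := by
    have : ψ (q ^ b w * d v) ∈ (fun u => ψ (q ^ b w * d u)) '' Set.Iio (w : ℕ) := ⟨v, hvw, rfl⟩
    simpa [← hS] using this
  obtain ⟨hdv, -, hmono⟩ := hstage v v.2
  have hjl : q ^ b w < L v :=
    (pow_le_pow_right₀ (by omega) (hstage w w.2).2.1).trans_lt (hL v w hvw w.2)
  exact exists_mono_mul_pow_of_mono_prog ψ hq hdv (hstage u (by omega)).1 (by positivity) hjl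
    (hmono u hu) hcol.symm

/-- Exponential Schur theorem: for every finite coloring of ℕ there exist
`x ≠ y`, both at least 2, with `x`, `y`, `x^y` monochromatic. -/
theorem exponential_schur (r : ℕ) (c : ℕ → Fin r) :
    ∃ x y : ℕ, 2 ≤ x ∧ 2 ≤ y ∧ x ≠ y ∧ c x = c y ∧ c x = c (x ^ y) := by
  obtain ⟨K, m, hK, hm, hne, h₁, h₂⟩ := exists_mono_mul_pow (fun n => c (2 ^ n)) le_rfl
  refine ⟨2 ^ m, 2 ^ K, Nat.le_self_pow hm.ne' 2, Nat.le_self_pow hK.ne' 2,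
    fun h => hne (Nat.pow_right_injective le_rfl h).symm, h₁.symm, ?_⟩
  rw [← pow_mul]
  exact h₂
end

section
/- Fix an integer n > 1. If A ⊆ ℕ is piecewise syndetic with respect to multiplication, then there exist x, y ∈ A such that x·n^y ∈ A. -/
/-- `T` is multiplicatively thick (in the semigroup `(ℕ≥1, ·)`). -/
def MulThick (T : Set ℕ) : Prop :=
  ∀ F : Finset ℕ, (∀ f ∈ F, 1 ≤ f) → ∃ x : ℕ, 1 ≤ x ∧ ∀ f ∈ F, f * x ∈ T

/-- `A` is multiplicatively piecewise syndetic. -/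
def MulPiecewiseSyndetic (A : Set ℕ) : Prop :=
  ∃ F : Finset ℕ, (∀ f ∈ F, 1 ≤ f) ∧ MulThick (⋃ f ∈ F, {y : ℕ | f * y ∈ A})

/-!
Colour a pair `i < j < N` by some `f ∈ F` with `f (j - i) x ∈ A`, where `x` comes from the
thickness of `⋃ f ∈ F, f⁻¹A` on `{1, …, N}`. Ramsey's theorem for pairs yields a set `D` of more
than `#F` elements all of whose positive differences lie in `A`. Thickness applied to
`{n ^ d | d ∈ D}` gives `z` and `g d ∈ F` with `g d * n ^ d * z ∈ A`; two elements `a < b` of `D`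
share `g`, and then `x = g a * n ^ a * z`, `y = b - a` work, since `x * n ^ y = g b * n ^ b * z`.
-/

open Finset

namespace Finset

variable {α κ : Type*} [LinearOrder α] [Fintype κ] [Nonempty κ] (R : α → α → κ → Prop)

theorem exists_prehomogeneous_subset (L : ℕ) (S : Finset α)
    (hS : (Fintype.card κ + 1) ^ L ≤ #S) (hR : ∀ i ∈ S, ∀ j ∈ S, i < j → ∃ k, R i j k) :
    ∃ H ⊆ S, L ≤ #H ∧ ∃ χ : α → κ, ∀ i ∈ H, ∀ j ∈ H, i < j → R i j (χ i) := by
  classical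
  induction L generalizing S with
  | zero => exact ⟨∅, empty_subset S, le_rfl, Classical.arbitrary _, by simp⟩
  | succ L ih =>
    have hne : S.Nonempty := card_pos.mp (lt_of_lt_of_le (by positivity) hS)
    set v := S.min' hne
    have hvS : v ∈ S := S.min'_mem hne
    have hv_lt : ∀ s ∈ S.erase v, v < s := fun s hs => S.min'_lt_of_mem_erase_min' hne hs
    choose! col hcol using fun s (hs : s ∈ S.erase v) =>
      hR v hvS s (mem_of_mem_erase hs) (hv_lt s hs)
    have hcard : #(univ : Finset κ) * (Fintype.card κ + 1) ^ L ≤ #(S.erase v) := by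
      rw [card_univ, card_erase_of_mem hvS]
      rw [pow_succ] at hS
      apply Nat.le_sub_one_of_lt
      nlinarith [Nat.one_le_pow L (Fintype.card κ + 1) (by omega)]
    obtain ⟨k, -, hk⟩ := exists_le_card_fiber_of_mul_le_card_of_maps_to
      (fun s _ => mem_univ (col s)) univ_nonempty hcard
    set U := (S.erase v).filter (col · = k)
    have hUS : U ⊆ S.erase v := filter_subset _ _
    obtain ⟨H, hHU, hH, χ, hχ⟩ := ih U hk fun i hi j hj =>
      hR i (mem_of_mem_erase (hUS hi)) j (mem_of_mem_erase (hUS hj))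
    have hvH : v ∉ H := fun h => notMem_erase v S (hUS (hHU h))
    have hsub : insert v H ⊆ S :=
      insert_subset hvS ((hHU.trans hUS).trans (erase_subset v S))
    refine ⟨insert v H, hsub, ?_, Function.update χ v k, ?_⟩
    · rw [card_insert_of_notMem hvH]; omega
    · intro i hi j hj hij
      have hj' : j ∈ H := by
        rcases mem_insert.mp hj with rfl | hj
        · exact absurd hij (not_lt.mpr (S.min'_le i (hsub hi)))
        · exact hj
      rcases mem_insert.mp hi with rfl | hi
      · rw [Function.update_self]
        obtain ⟨hjS, hjk⟩ := mem_filter.mp (hHU hj')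
        exact hjk ▸ hcol j hjS
      · rw [Function.update_of_ne (ne_of_mem_of_not_mem hi hvH)]
        exact hχ i hi j hj' hij

theorem exists_monochromatic_subset (m : ℕ) (S : Finset α)
    (hS : (Fintype.card κ + 1) ^ (Fintype.card κ * m) ≤ #S)
    (hR : ∀ i ∈ S, ∀ j ∈ S, i < j → ∃ k, R i j k) :
    ∃ H ⊆ S, m ≤ #H ∧ ∃ k, ∀ i ∈ H, ∀ j ∈ H, i < j → R i j k := by
  classical
  obtain ⟨H, hHS, hH, χ, hχ⟩ := exists_prehomogeneous_subset R _ S hS hR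
  obtain ⟨k, -, hk⟩ := exists_le_card_fiber_of_mul_le_card_of_maps_to
    (fun s _ => mem_univ (χ s)) univ_nonempty (by rwa [card_univ])
  refine ⟨H.filter (χ · = k), (filter_subset _ _).trans hHS, hk, k, fun i hi j hj hij => ?_⟩
  rw [← (mem_filter.mp hi).2]
  exact hχ i (mem_filter.mp hi).1 j (mem_filter.mp hj).1 hij

end Finset

theorem MulPiecewiseSyndetic.exists_finset_sub_mem {A : Set ℕ} (hA : MulPiecewiseSyndetic A)
    (m : ℕ) : ∃ D : Finset ℕ, m ≤ #D ∧ ∀ a ∈ D, ∀ b ∈ D, a < b → b - a ∈ A := by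
  classical
  obtain ⟨F, hF, hT⟩ := hA
  have : Nonempty F := by
    obtain ⟨_, -, hx⟩ := hT {1} (by simp)
    obtain ⟨f, hf, -⟩ := Set.mem_iUnion₂.mp (hx 1 (mem_singleton_self 1))
    exact ⟨⟨f, hf⟩⟩
  set N := (#F + 1) ^ (#F * m)
  obtain ⟨x, hx, hNx⟩ := hT (Icc 1 N) fun d hd => (mem_Icc.mp hd).1
  have hcol : ∀ i ∈ range N, ∀ j ∈ range N, i < j → ∃ f : F, f * ((j - i) * x) ∈ A := by
    intro i _ j hj hij
    have hji : j - i ∈ Icc 1 N := mem_Icc.mpr ⟨by omega, by have := mem_range.mp hj; omega⟩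
    obtain ⟨f, hf, hfA⟩ := Set.mem_iUnion₂.mp (hNx (j - i) hji)
    exact ⟨⟨f, hf⟩, hfA⟩
  obtain ⟨H, -, hH, ⟨k, hkF⟩, hk⟩ := exists_monochromatic_subset
    (fun i j (f : F) => f * ((j - i) * x) ∈ A) m (range N)
    (by rw [card_range, Fintype.card_coe]) hcol
  have hkx : k * x ≠ 0 := Nat.mul_ne_zero (by have := hF k hkF; omega) (by omega)
  refine ⟨H.image (k * x * ·), by rwa [card_image_of_injective _ (mul_right_injective₀ hkx)], ?_⟩
  simp only [mem_image]
  rintro _ ⟨i, hi, rfl⟩ _ ⟨j, hj, rfl⟩ hij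
  have hij' : i < j := lt_of_mul_lt_mul_left hij (Nat.zero_le _)
  convert hk i hi j hj hij' using 1
  rw [← Nat.mul_sub]; ring

theorem exists_mul_pow_sub_mem_of_mulThick {A : Set ℕ} {F : Finset ℕ}
    (hT : MulThick (⋃ f ∈ F, {y : ℕ | f * y ∈ A})) {n : ℕ} (hn : n ≠ 0) {D : Finset ℕ}
    (hD : #F < #D) : ∃ a ∈ D, ∃ b ∈ D, a < b ∧ ∃ x ∈ A, x * n ^ (b - a) ∈ A := by
  classical
  obtain ⟨z, -, hz⟩ := hT (D.image (n ^ ·)) (by simp [Nat.one_le_iff_ne_zero, hn])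
  choose! g hgF hgA using fun d (hd : d ∈ D) =>
    Set.mem_iUnion₂.mp (hz (n ^ d) (mem_image_of_mem _ hd))
  obtain ⟨a, ha, b, hb, hab, hg⟩ := exists_ne_map_eq_of_card_lt_of_maps_to hD hgF
  wlog hlt : a < b generalizing a b
  · exact this b hb a ha hab.symm hg.symm (hab.lt_or_gt.resolve_left hlt)
  refine ⟨a, ha, b, hb, hlt, g a * (n ^ a * z), hgA a ha, ?_⟩
  have hpow : n ^ a * n ^ (b - a) = n ^ b := by rw [← pow_add, Nat.add_sub_cancel' hlt.le]
  rw [show g a * (n ^ a * z) * n ^ (b - a) = g b * (n ^ b * z) by rw [← hg, ← hpow]; ring]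
  exact hgA b hb

/-- Every multiplicatively piecewise syndetic set contains `x, y` with `x·n^y` in it. -/
theorem mulPWS_exponential (n : ℕ) (hn : 1 < n) (A : Set ℕ)
    (hA : MulPiecewiseSyndetic A) :
    ∃ x ∈ A, ∃ y ∈ A, x * n ^ y ∈ A := by
  obtain ⟨F, -, hT⟩ := id hA
  obtain ⟨D, hD, hDA⟩ := hA.exists_finset_sub_mem (#F + 1)
  obtain ⟨a, ha, b, hb, hab, x, hx, hxA⟩ :=
    exists_mul_pow_sub_mem_of_mulThick hT (Nat.ne_zero_of_lt hn) hD
  exact ⟨x, hx, b - a, hDA a ha b hb hab, hxA⟩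
end

section
/- Let A = ⋃_{n∈ℕ} [xₙ, yₙ] where x₁ = y₁ > 2 and for each n: yₙ^{yₙ} < x_{n+1} ≤ y_{n+1} < x_{n+1}² < 2^{x_{n+1}}. Then for all x, y ∈ A with x < y one has x^y ∉ A. -/
/-! If `y ∈ [xₖ, yₖ]` and `2 ≤ x < y`, then `yₖ < 2^{xₖ} ≤ x^y < y^y ≤ yₖ^{yₖ} < x_{k+1}`,
so `x^y` falls into the gap between the `k`-th and the `(k+1)`-st interval. -/

open Set

lemma Nat.self_le_pow_self (m : ℕ) : m ≤ m ^ m := by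
  rcases m.eq_zero_or_pos with rfl | hm
  · exact Nat.zero_le _
  · exact Nat.le_self_pow hm.ne' m

lemma Nat.lt_pow_of_lt_two_pow {a b lo hi : ℕ} (ha : 2 ≤ a) (hb : lo ≤ b) (hhi : hi < 2 ^ lo) :
    hi < a ^ b :=
  calc hi < 2 ^ lo := hhi
    _ ≤ 2 ^ b := Nat.pow_le_pow_right two_pos hb
    _ ≤ a ^ b := Nat.pow_le_pow_left ha b

lemma Nat.pow_lt_pow_self_of_lt_of_le {a b hi : ℕ} (hab : a < b) (hb : b ≤ hi) :
    a ^ b < hi ^ hi :=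
  calc a ^ b < b ^ b := Nat.pow_lt_pow_left hab (by omega)
    _ ≤ hi ^ b := Nat.pow_le_pow_left hb b
    _ ≤ hi ^ hi := Nat.pow_le_pow_right (by omega) hb

section SeparatedIntervals

variable {x y : ℕ → ℕ}

lemma monotone_left_of_separated (hxy : ∀ n, x n ≤ y n) (hsep : ∀ n, y n < x (n + 1)) :
    Monotone x :=
  monotone_nat_of_le_succ fun n => ((hxy n).trans_lt (hsep n)).le

lemma monotone_right_of_separated (hxy : ∀ n, x n ≤ y n) (hsep : ∀ n, y n < x (n + 1)) :
    Monotone y :=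
  monotone_nat_of_le_succ fun n => ((hsep n).trans_le (hxy (n + 1))).le

lemma notMem_iUnion_Icc_of_separated (hxy : ∀ n, x n ≤ y n) (hsep : ∀ n, y n < x (n + 1))
    {k c : ℕ} (hlo : y k < c) (hhi : c < x (k + 1)) :
    c ∉ ⋃ n, Icc (x n) (y n) := by
  rintro ⟨_, ⟨n, rfl⟩, hn, hc⟩
  rcases le_or_gt n k with h | h
  · exact (hc.trans (monotone_right_of_separated hxy hsep h)).not_gt hlo
  · exact (hhi.trans_le (monotone_left_of_separated hxy hsep h)).not_ge hn

end SeparatedIntervals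

/-- If `A = ⋃ n, [xₙ, yₙ]` with `x₀ = y₀ > 2` and
`yₙ^yₙ < x_{n+1} ≤ y_{n+1} < x_{n+1}² < 2^{x_{n+1}}`, then for `x < y` in `A`,
`x^y ∉ A`. -/
theorem pow_not_mem_lt (x y : ℕ → ℕ) (h1 : 2 < x 0) (h2 : x 0 = y 0)
    (hgap : ∀ n : ℕ, (y n) ^ (y n) < x (n + 1) ∧ x (n + 1) ≤ y (n + 1) ∧
      y (n + 1) < (x (n + 1)) ^ 2 ∧ (x (n + 1)) ^ 2 < 2 ^ (x (n + 1))) :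
    ∀ a ∈ ⋃ n : ℕ, Set.Icc (x n) (y n), ∀ b ∈ ⋃ n : ℕ, Set.Icc (x n) (y n),
      a < b → a ^ b ∉ ⋃ n : ℕ, Set.Icc (x n) (y n) := by
  have hxy : ∀ n, x n ≤ y n := fun n => n.casesOn h2.le fun n => (hgap n).2.1
  have hsep : ∀ n, y n < x (n + 1) := fun n => (Nat.self_le_pow_self _).trans_lt (hgap n).1
  have hy_lt_two_pow : ∀ n, y n < 2 ^ x n := by
    rintro (_ | n)
    · exact h2 ▸ Nat.lt_two_pow_self
    · obtain ⟨-, -, hy, hx⟩ := hgap n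
      exact hy.trans hx
  rintro a ⟨_, ⟨m, rfl⟩, ham, -⟩ b ⟨_, ⟨k, rfl⟩, hkb, hbk⟩ hab
  have ha : 2 ≤ a := (h1.trans_le (monotone_left_of_separated hxy hsep m.zero_le)).le.trans ham
  exact notMem_iUnion_Icc_of_separated hxy hsep (Nat.lt_pow_of_lt_two_pow ha hkb (hy_lt_two_pow k))
    ((Nat.pow_lt_pow_self_of_lt_of_le hab hbk).trans (hgap k).1)
end

section
/- Let A = ⋃_{n∈ℕ} [xₙ, yₙ] where x₁ = y₁ > 2 and for each n: yₙ^{yₙ} < x_{n+1} ≤ y_{n+1} < x_{n+1}² < 2^{x_{n+1}}. Then for all x, y ∈ A with x > y ≥ 2 one has x^y ∉ A. -/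
/-!
Write `A = ⋃ n, [xₙ, yₙ]`. If `a ∈ [xₘ, yₘ]` and `2 ≤ b < a`, then
`yₘ < xₘ² ≤ a² ≤ a^b ≤ yₘ^yₘ < xₘ₊₁`, so `a^b` falls into the gap between the `m`-th and the
`(m+1)`-st interval.
-/

open Set

namespace Nat

theorem self_le_pow_self_s6 (n : ℕ) : n ≤ n ^ n := by
  rcases n.eq_zero_or_pos with rfl | hn
  · exact zero_le _
  · exact le_self_pow hn.ne' n

end Nat

section Intervals

variable {x y : ℕ → ℕ}

theorem not_mem_iUnion_Icc_of_lt_of_lt (hxy : ∀ n, x n ≤ y n) (hyx : ∀ n, y n < x (n + 1))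
    {m c : ℕ} (hlo : y m < c) (hhi : c < x (m + 1)) : c ∉ ⋃ n, Icc (x n) (y n) := by
  have hx : StrictMono x := strictMono_nat_of_lt_succ fun n => (hxy n).trans_lt (hyx n)
  have hy : StrictMono y := strictMono_nat_of_lt_succ fun n => (hyx n).trans_le (hxy (n + 1))
  rintro hc
  obtain ⟨n, hxn, hyn⟩ := mem_iUnion.1 hc
  rcases le_or_gt n m with hnm | hmn
  · exact (hlo.trans_le hyn).not_ge (hy.monotone hnm)
  · exact (hhi.trans_le (hx.monotone hmn)).not_ge hxn

theorem lt_pow_of_mem_Icc (h0 : x 0 = y 0) (hsq : ∀ n, y (n + 1) < x (n + 1) ^ 2)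
    {m a b : ℕ} (ha : a ∈ Icc (x m) (y m)) (h2a : 2 ≤ a) (h2b : 2 ≤ b) : y m < a ^ b := by
  cases m with
  | zero =>
    calc y 0 = x 0 := h0.symm
      _ ≤ a := ha.1
      _ < a ^ b := lt_self_pow₀ h2a h2b
  | succ m =>
    calc y (m + 1) < x (m + 1) ^ 2 := hsq m
      _ ≤ a ^ 2 := Nat.pow_le_pow_left ha.1 2
      _ ≤ a ^ b := Nat.pow_le_pow_right (by omega) h2b

end Intervals

theorem pow_not_mem_gt_general (x y : ℕ → ℕ) (h2 : x 0 = y 0)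
    (hgap : ∀ n : ℕ, (y n) ^ (y n) < x (n + 1) ∧ x (n + 1) ≤ y (n + 1) ∧
      y (n + 1) < (x (n + 1)) ^ 2 ∧ (x (n + 1)) ^ 2 < 2 ^ (x (n + 1))) :
    ∀ a ∈ ⋃ n : ℕ, Set.Icc (x n) (y n), ∀ b ∈ ⋃ n : ℕ, Set.Icc (x n) (y n),
      b < a → 2 ≤ b → a ^ b ∉ ⋃ n : ℕ, Set.Icc (x n) (y n) := by
  have hxy : ∀ n, x n ≤ y n
    | 0 => h2.le
    | n + 1 => (hgap n).2.1
  have hyx (n : ℕ) : y n < x (n + 1) := (Nat.self_le_pow_self_s6 (y n)).trans_lt (hgap n).1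
  rintro a ha b - hba h2b
  obtain ⟨m, hxa, hay⟩ := mem_iUnion.1 ha
  refine not_mem_iUnion_Icc_of_lt_of_lt hxy hyx (m := m) ?_ ?_
  · exact lt_pow_of_mem_Icc h2 (fun n => (hgap n).2.2.1) ⟨hxa, hay⟩ (by omega) h2b
  · calc a ^ b ≤ y m ^ y m := pow_le_pow hay (by omega) (by omega)
      _ < x (m + 1) := (hgap m).1

/-- If `A = ⋃ n, [xₙ, yₙ]` with `x₀ = y₀ > 2` and
`yₙ^yₙ < x_{n+1} ≤ y_{n+1} < x_{n+1}² < 2^{x_{n+1}}`, then for `x > y ≥ 2` in `A`,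
`x^y ∉ A`. -/
theorem pow_not_mem_gt (x y : ℕ → ℕ) (h1 : 2 < x 0) (h2 : x 0 = y 0)
    (hgap : ∀ n : ℕ, (y n) ^ (y n) < x (n + 1) ∧ x (n + 1) ≤ y (n + 1) ∧
      y (n + 1) < (x (n + 1)) ^ 2 ∧ (x (n + 1)) ^ 2 < 2 ^ (x (n + 1))) :
    ∀ a ∈ ⋃ n : ℕ, Set.Icc (x n) (y n), ∀ b ∈ ⋃ n : ℕ, Set.Icc (x n) (y n),
      b < a → 2 ≤ b → a ^ b ∉ ⋃ n : ℕ, Set.Icc (x n) (y n) :=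
  pow_not_mem_gt_general x y h2 hgap
end

section
/- For the semigroup of ultrafilters (βℕ, +) (ultrafilters on ℕ with the extension of addition), if p belongs to a minimal left ideal of (βℕ, +), then there exists an ultrafilter u in that minimal left ideal such that u + p = p. -/
/-
If `p` lies in the minimal left ideal `L`, then `L + p` is a left ideal (by associativity)
inside `L`, so by minimality it is all of `L`; in particular `p ∈ L + p`.
-/

/-- The extension of addition on ℕ to ultrafilters:
`A ∈ p + q ↔ {x | {y | x + y ∈ A} ∈ q} ∈ p`. -/
def uadd (p q : Ultrafilter ℕ) : Ultrafilter ℕ :=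
  p.bind fun x => q.map fun y => x + y

/-- `L` is a left ideal of `(βℕ, +)`. -/
def IsLeftIdeal (L : Set (Ultrafilter ℕ)) : Prop :=
  L.Nonempty ∧ ∀ p ∈ L, ∀ q : Ultrafilter ℕ, uadd q p ∈ L

/-- `L` is a minimal left ideal of `(βℕ, +)`. -/
def IsMinimalLeftIdeal (L : Set (Ultrafilter ℕ)) : Prop :=
  IsLeftIdeal L ∧ ∀ L' : Set (Ultrafilter ℕ), IsLeftIdeal L' → L' ⊆ L → L' = L

lemma uadd_assoc (p q r : Ultrafilter ℕ) :
    uadd (uadd p q) r = uadd p (uadd q r) :=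
  @add_assoc _ Ultrafilter.addSemigroup p q r

lemma IsLeftIdeal.image_uadd_right {L : Set (Ultrafilter ℕ)} (hL : IsLeftIdeal L)
    (p : Ultrafilter ℕ) : IsLeftIdeal ((uadd · p) '' L) := by
  refine ⟨hL.1.image _, ?_⟩
  rintro _ ⟨q, hq, rfl⟩ s
  exact ⟨uadd s q, hL.2 q hq s, uadd_assoc s q p⟩

lemma IsLeftIdeal.image_uadd_right_subset {L : Set (Ultrafilter ℕ)} (hL : IsLeftIdeal L)
    {p : Ultrafilter ℕ} (hp : p ∈ L) : (uadd · p) '' L ⊆ L := by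
  rintro _ ⟨q, -, rfl⟩
  exact hL.2 p hp q

/-- If `p` lies in a minimal left ideal `L` of `(βℕ, +)`, then `u + p = p` for
some `u ∈ L`. -/
theorem exists_uadd_eq_of_minimalLeftIdeal (L : Set (Ultrafilter ℕ))
    (hL : IsMinimalLeftIdeal L) (p : Ultrafilter ℕ) (hp : p ∈ L) :
    ∃ u ∈ L, uadd u p = p := by
  have hL_eq : (uadd · p) '' L = L :=
    hL.2 _ (hL.1.image_uadd_right p) (hL.1.image_uadd_right_subset hp)
  have hp_mem : p ∈ (uadd · p) '' L := hL_eq.symm ▸ hp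
  exact hp_mem
end

section
/- Let n > 1 and let a ≠ b be natural numbers, and let p be an ultrafilter on ℕ. Then a + p and b + p cannot both belong to ℍₙ = {q ∈ βℕ : ∀m, n^m ℕ ∈ q}. (Equivalently: at most one shift m + p of p lies in ℍₙ.) -/
/-! If `n ^ m` divides both `a + x` and `b + x` then `a ≡ b [MOD n ^ m]`; choosing `n ^ m > max a b`
forces `a = b`. Such an `x` exists because both divisibility sets lie in the ultrafilter `p`. -/

theorem Nat.eq_of_dvd_add_right_of_lt {k a b x : ℕ} (ha : k ∣ a + x) (hb : k ∣ b + x)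
    (hak : a < k) (hbk : b < k) : a = b :=
  have hmod : a + x ≡ b + x [MOD k] :=
    (Nat.modEq_zero_iff_dvd.2 ha).trans (Nat.modEq_zero_iff_dvd.2 hb).symm
  (hmod.add_right_cancel' x).eq_of_lt_of_lt hak hbk

/-- At most one shift `m + p` of an ultrafilter `p` can lie in
`ℍₙ = {q | ∀ m, n^m ℕ ∈ q}`: two distinct shifts `a + p` and `b + p` cannot
both belong to `ℍₙ`. -/
theorem shifts_not_both_in_H (n : ℕ) (hn : 1 < n) (a b : ℕ) (hab : a ≠ b)
    (p : Ultrafilter ℕ) :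
    ¬ ((∀ m : ℕ, {x : ℕ | n ^ m ∣ x} ∈ Ultrafilter.map (fun x => a + x) p) ∧
       (∀ m : ℕ, {x : ℕ | n ^ m ∣ x} ∈ Ultrafilter.map (fun x => b + x) p)) := by
  rintro ⟨ha, hb⟩
  obtain ⟨m, hm⟩ : ∃ m, max a b < n ^ m := ⟨max a b, Nat.lt_pow_self hn⟩
  obtain ⟨x, hax, hbx⟩ : ({x | n ^ m ∣ a + x} ∩ {x | n ^ m ∣ b + x}).Nonempty :=
    p.nonempty_of_mem (p.inter_mem (ha m) (hb m))
  obtain ⟨ham, hbm⟩ := max_lt_iff.1 hm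
  exact hab (Nat.eq_of_dvd_add_right_of_lt hax hbx ham hbm)
end

section
/- Fix n > 1. For every r-coloring of ℕ and every multiplicatively syndetic set S ⊆ ℕ with ℕ = ⋃_{t∈F} t⁻¹S and |F| = r, and every IP_{r+1} set FS(b₁,...,b_{r+1}) ⊆ A: by pigeonhole on the r+1 elements n^{b₁+⋯+b_m} (m = 1,...,r+1) distributed among the r sets t⁻¹S, there exist t ∈ F and m < m' such that both t·n^{b₁+⋯+b_m} ∈ S and t·n^{b₁+⋯+b_{m'}} ∈ S; writing b = n^{b₁+⋯+b_m} and c = b_{m+1}+⋯+b_{m'}, one gets t·b ∈ S and (t·b)·n^c ∈ S. -/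
/-! Color each partial sum `b₀ + ⋯ + b_{m-1}` (`1 ≤ m ≤ r + 1`) by some `t ∈ F` with
`t · n^(b₀ + ⋯ + b_{m-1}) ∈ S`. There are `r + 1` partial sums and only `r` colors, so two of
them, `m < m'`, get the same color `t`; the ratio of the two elements of `S` is `n^c` with
`c = b_m + ⋯ + b_{m'-1}`, a finite sum of the `b_i` and hence in `A`. -/

open Finset

theorem Finset.exists_lt_le_card_of_forall_exists_mem {β : Type*} {F : Finset β}
    {P : β → ℕ → Prop} (h : ∀ i, ∃ t ∈ F, P t i) :
    ∃ t ∈ F, ∃ i j, i < j ∧ j ≤ #F ∧ P t i ∧ P t j := by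
  choose c hcF hcP using h
  have hcard : #F < #(range (#F + 1)) := by simp
  obtain ⟨i, hi, j, hj, hne, hcij⟩ :=
    exists_ne_map_eq_of_card_lt_of_maps_to hcard fun i _ => hcF i
  rw [mem_range] at hi hj
  rcases hne.lt_or_gt with hij | hji
  · exact ⟨c i, hcF i, i, j, hij, by omega, hcP i, hcij ▸ hcP j⟩
  · exact ⟨c j, hcF j, j, i, hji, by omega, hcP j, hcij ▸ hcP i⟩

theorem Finset.Ico_nonempty_subset_range {m m' k : ℕ} (hm : m < m') (hm' : m' ≤ k) :
    (Ico m m').Nonempty ∧ Ico m m' ⊆ range k :=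
  ⟨nonempty_Ico.mpr hm, fun i hi => mem_range.mpr (by rw [mem_Ico] at hi; omega)⟩

theorem pigeonhole_exponential_schur_general (n : ℕ) (r : ℕ)
    (F : Finset ℕ) (hF : F.card = r) (S A : Set ℕ)
    (hcov : ∀ y : ℕ, ∃ t ∈ F, t * y ∈ S) (b : ℕ → ℕ)
    (hb : ∀ H : Finset ℕ, H.Nonempty → H ⊆ Finset.range (r + 1) →
      (∑ i ∈ H, b i) ∈ A) :
    ∃ t ∈ F, ∃ m m' : ℕ, 1 ≤ m ∧ m < m' ∧ m' ≤ r + 1 ∧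
      t * n ^ (∑ i ∈ Finset.range m, b i) ∈ S ∧
      t * n ^ (∑ i ∈ Finset.range m', b i) ∈ S ∧
      (t * n ^ (∑ i ∈ Finset.range m, b i)) * n ^ (∑ i ∈ Finset.Ico m m', b i) ∈ S ∧
      (∑ i ∈ Finset.Ico m m', b i) ∈ A := by
  obtain ⟨t, htF, i, j, hij, hjr, hi, hj⟩ := exists_lt_le_card_of_forall_exists_mem
    (P := fun t i => t * n ^ (∑ k ∈ range (i + 1), b k) ∈ S) fun i => hcov _
  have hsplit : (∑ k ∈ range (i + 1), b k) + ∑ k ∈ Ico (i + 1) (j + 1), b k =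
      ∑ k ∈ range (j + 1), b k :=
    sum_range_add_sum_Ico b (by omega)
  obtain ⟨hne, hsub⟩ := Ico_nonempty_subset_range (k := r + 1) (Nat.succ_lt_succ hij) (by omega)
  refine ⟨t, htF, i + 1, j + 1, by omega, by omega, by omega, hi, hj, ?_, hb _ hne hsub⟩
  rwa [mul_assoc, ← pow_add, hsplit]

/-- Pigeonhole core of the second proof of the exponential Schur theorem:
if `ℕ = ⋃_{t ∈ F} t⁻¹S` with `|F| = r`, and `FS(b₀, …, b_r) ⊆ A`, then there
are `t ∈ F` and `m < m' ≤ r + 1` with both `t·n^{b₀+⋯+b_{m-1}} ∈ S` and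
`t·n^{b₀+⋯+b_{m'-1}} ∈ S`; hence with `z = t·n^{b₀+⋯+b_{m-1}}` and
`c = b_m + ⋯ + b_{m'-1}` we get `z ∈ S`, `z·n^c ∈ S` and `c ∈ A`. -/
theorem pigeonhole_exponential_schur (n : ℕ) (hn : 1 < n) (r : ℕ)
    (F : Finset ℕ) (hF : F.card = r) (S A : Set ℕ)
    (hcov : ∀ y : ℕ, ∃ t ∈ F, t * y ∈ S) (b : ℕ → ℕ)
    (hb : ∀ H : Finset ℕ, H.Nonempty → H ⊆ Finset.range (r + 1) →
      (∑ i ∈ H, b i) ∈ A) :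
    ∃ t ∈ F, ∃ m m' : ℕ, 1 ≤ m ∧ m < m' ∧ m' ≤ r + 1 ∧
      t * n ^ (∑ i ∈ Finset.range m, b i) ∈ S ∧
      t * n ^ (∑ i ∈ Finset.range m', b i) ∈ S ∧
      (t * n ^ (∑ i ∈ Finset.range m, b i)) * n ^ (∑ i ∈ Finset.Ico m m', b i) ∈ S ∧
      (∑ i ∈ Finset.Ico m m', b i) ∈ A :=
  pigeonhole_exponential_schur_general n r F hF S A hcov b hb
end
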